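/- Let S² = {(x,y,z) ∈ ℝ³ : x² + y² + z² = 1} with its standard smooth manifold structure, let M = S² × S², and let N = (0,0,1), S = (0,0,−1) be the poles. For s ∈ ℝ define the smooth functions L, H_s : M → ℝ by L(x₁,y₁,z₁,x₂,y₂,z₂) = z₁ + 2z₂ and H_s(x₁,y₁,z₁,x₂,y₂,z₂) = (1−s)z₁ + s·z₂ + 2(1−s)s(x₁x₂ + y₁y₂). Then for every s ∈ ℝ, a point m ∈ M satisfies (dL)(m) = 0 and (dH_s)(m) = 0 (both differentials on the manifold M vanish at m) if and only if m ∈ {N × N, N × S, S × N, S × S}. That is, the rank-zero singular points of the momentum map F_s = (L, H_s) are exactly the four products of poles. -/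

import Mathlib

open Metric Manifold

/-- The unit 2-sphere `S² ⊂ ℝ³`. -/
noncomputable abbrev Sphere2 := sphere (0 : EuclideanSpace ℝ (Fin 3)) 1

/-- The north pole `N = (0, 0, 1)` of `S²`. -/
noncomputable def northPole : Sphere2 :=
  ⟨EuclideanSpace.single (2 : Fin 3) (1 : ℝ), by
    simp [mem_sphere_zero_iff_norm, EuclideanSpace.norm_single]⟩

/-- The south pole `S = (0, 0, −1)` of `S²`. -/
noncomputable def southPole : Sphere2 :=
  ⟨EuclideanSpace.single (2 : Fin 3) (-1 : ℝ), by
    simp [mem_sphere_zero_iff_norm, EuclideanSpace.norm_single]⟩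

/-- `L(x₁,y₁,z₁,x₂,y₂,z₂) = z₁ + 2z₂` on `M = S² × S²`. -/
noncomputable def Lmap (m : Sphere2 × Sphere2) : ℝ :=
  (m.1 : EuclideanSpace ℝ (Fin 3)) 2 + 2 * (m.2 : EuclideanSpace ℝ (Fin 3)) 2

/-- `H_s(x₁,y₁,z₁,x₂,y₂,z₂) = (1−s)z₁ + s z₂ + 2(1−s)s(x₁x₂ + y₁y₂)` on `M = S² × S²`. -/
noncomputable def Hmap (s : ℝ) (m : Sphere2 × Sphere2) : ℝ :=
  (1 - s) * (m.1 : EuclideanSpace ℝ (Fin 3)) 2 + s * (m.2 : EuclideanSpace ℝ (Fin 3)) 2 +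
    2 * (1 - s) * s *
      ((m.1 : EuclideanSpace ℝ (Fin 3)) 0 * (m.2 : EuclideanSpace ℝ (Fin 3)) 0 +
        (m.1 : EuclideanSpace ℝ (Fin 3)) 1 * (m.2 : EuclideanSpace ℝ (Fin 3)) 1)

local instance : Fact (Module.finrank ℝ (EuclideanSpace ℝ (Fin 3)) = 2 + 1) :=
  ⟨finrank_euclideanSpace_fin⟩

local notation "E3" => EuclideanSpace ℝ (Fin 3)

/-- The manifold derivative of an affine function restricted to the sphere vanishes iff the
linear part vanishes on the tangent space, i.e. on the orthogonal complement of the base point. -/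
lemma mfderiv_sphere_lin (ℓ : E3 →L[ℝ] ℝ) (c : ℝ) (v : Sphere2) :
    mfderiv (𝓡 2) 𝓘(ℝ, ℝ) (fun z : Sphere2 => ℓ (z : E3) + c) v = 0 ↔
      ∀ w ∈ (ℝ ∙ (v : E3))ᗮ, ℓ w = 0 := by
  have hcoe : MDifferentiableAt (𝓡 2) 𝓘(ℝ, E3) ((↑) : Sphere2 → E3) v :=
    (contMDiff_coe_sphere (m := ⊤) v).mdifferentiableAt (by simp)
  have hg : MDifferentiableAt 𝓘(ℝ, E3) 𝓘(ℝ, ℝ) (fun x : E3 => ℓ x + c) ((v : E3)) :=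
    ((ℓ.differentiable.differentiableAt).add_const c).mdifferentiableAt
  have hcomp := mfderiv_comp v hg hcoe
  have hg' : mfderiv 𝓘(ℝ, E3) 𝓘(ℝ, ℝ) (fun x : E3 => ℓ x + c) (v : E3) = ℓ := by
    rw [mfderiv_eq_fderiv, fderiv_add_const, ContinuousLinearMap.fderiv]
  rw [show (fun z : Sphere2 => ℓ (z : E3) + c)
      = (fun x : E3 => ℓ x + c) ∘ ((↑) : Sphere2 → E3) from rfl, hcomp, hg']
  constructor
  · intro h w hw
    have h3 := range_mfderiv_coe_sphere (n := 2) v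
    rw [← h3] at hw
    obtain ⟨u, rfl⟩ := hw
    exact congrFun (congrArg DFunLike.coe h) u
  · intro h
    ext u
    exact h ((mfderiv (𝓡 2) 𝓘(ℝ, E3) ((↑) : Sphere2 → E3) v) u) (by
      have h3 := range_mfderiv_coe_sphere (n := 2) v
      rw [← h3]; exact ⟨u, rfl⟩)

lemma e2_mem_iff (v : Sphere2) :
    EuclideanSpace.single (2 : Fin 3) (1 : ℝ) ∈ (ℝ ∙ (v : E3)) ↔
      v = northPole ∨ v = southPole := by
  rw [Submodule.mem_span_singleton]
  constructor
  · rintro ⟨t, ht⟩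
    have hv : ‖(v : E3)‖ = 1 := norm_eq_of_mem_sphere v
    have hn : ‖t • (v : E3)‖ = 1 := by
      rw [ht]; simp [EuclideanSpace.norm_single]
    rw [norm_smul, hv, mul_one, Real.norm_eq_abs] at hn
    rcases abs_eq (by norm_num : (0:ℝ) ≤ 1) |>.1 hn with h1 | h1
    · left
      apply Subtype.ext
      have : (v : E3) = EuclideanSpace.single (2 : Fin 3) (1 : ℝ) := by
        rw [← ht, h1, one_smul]
      simpa [northPole] using this
    · right
      apply Subtype.ext
      have : (v : E3) = -EuclideanSpace.single (2 : Fin 3) (1 : ℝ) := by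
        have := ht
        rw [h1] at this
        simpa [neg_smul, one_smul, neg_eq_iff_eq_neg] using this
      rw [this]
      simp [southPole]
      ext i
      simp [EuclideanSpace.single_apply]
      split <;> norm_num
  · rintro (rfl | rfl)
    · exact ⟨1, by simp [northPole]⟩
    · exact ⟨-1, by
        simp [southPole]
        ext i
        simp [EuclideanSpace.single_apply]
        split <;> norm_num⟩

/-- The third coordinate functional vanishes on the tangent space at `v` iff `v` is a pole. -/
lemma proj2_vanish_iff (v : Sphere2) :
    (∀ w ∈ (ℝ ∙ (v : E3))ᗮ, w 2 = 0) ↔ v = northPole ∨ v = southPole := by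
  rw [← e2_mem_iff]
  have horth : ∀ w : E3, (w 2 : ℝ) = inner ℝ (EuclideanSpace.single (2 : Fin 3) (1 : ℝ)) w := by
    intro w
    rw [EuclideanSpace.inner_single_left]
    simp
  constructor
  · intro h
    rw [← Submodule.orthogonal_orthogonal (ℝ ∙ (v : E3))]
    rw [Submodule.mem_orthogonal]
    intro w hw
    rw [real_inner_comm, ← horth]
    exact h w hw
  · intro h w hw
    rw [horth w]
    exact (Submodule.mem_orthogonal _ _ |>.1 hw) _ h

/-- The derivative of a real-valued function on `S² × S²` vanishes iff both partial
derivatives vanish. -/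
lemma mfderiv_prod_zero_iff {f : Sphere2 × Sphere2 → ℝ} (p q : Sphere2)
    (hf : MDifferentiableAt ((𝓡 2).prod (𝓡 2)) 𝓘(ℝ, ℝ) f (p, q)) :
    mfderiv ((𝓡 2).prod (𝓡 2)) 𝓘(ℝ, ℝ) f (p, q) = 0 ↔
      mfderiv (𝓡 2) 𝓘(ℝ, ℝ) (fun z => f (z, q)) p = 0 ∧
      mfderiv (𝓡 2) 𝓘(ℝ, ℝ) (fun z => f (p, z)) q = 0 := by
  constructor
  · intro h
    constructor
    · ext u
      have h2 := mfderiv_prod_eq_add_apply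
        (v := ((u, 0) : TangentSpace ((𝓡 2).prod (𝓡 2)) (p, q))) hf
      rw [h] at h2
      have h4 : (mfderiv (𝓡 2) 𝓘(ℝ, ℝ) (fun z => f (p, z)) q) 0 = 0 := map_zero _
      have h5 : mfderiv (𝓡 2) 𝓘(ℝ, ℝ) (fun z => f (z, q)) p u + mfderiv (𝓡 2) 𝓘(ℝ, ℝ) (fun z => f (p, z)) q 0 = 0 := h2.symm
      rw [h4, add_zero] at h5
      exact h5
    · ext u
      have h2 := mfderiv_prod_eq_add_apply
        (v := ((0, u) : TangentSpace ((𝓡 2).prod (𝓡 2)) (p, q))) hf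
      rw [h] at h2
      have h4 : (mfderiv (𝓡 2) 𝓘(ℝ, ℝ) (fun z => f (z, q)) p) 0 = 0 := map_zero _
      have h5 : mfderiv (𝓡 2) 𝓘(ℝ, ℝ) (fun z => f (z, q)) p 0 + mfderiv (𝓡 2) 𝓘(ℝ, ℝ) (fun z => f (p, z)) q u = 0 := h2.symm
      rw [h4, zero_add] at h5
      exact h5
  · rintro ⟨h1, h2⟩
    rw [mfderiv_prod_eq_add_comp hf]
    have e1 : (fun z : Sphere2 × Sphere2 => f (z.1, q)) = fun z : Sphere2 × Sphere2 =>
        (fun y : Sphere2 => f (y, q)) z.1 := rfl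
    rw [show mfderiv (𝓡 2) 𝓘(ℝ, ℝ) (fun z => f (z, (p, q).2)) (p, q).1
        = mfderiv (𝓡 2) 𝓘(ℝ, ℝ) (fun z => f (z, q)) p from rfl,
      show mfderiv (𝓡 2) 𝓘(ℝ, ℝ) (fun z => f ((p, q).1, z)) (p, q).2
        = mfderiv (𝓡 2) 𝓘(ℝ, ℝ) (fun z => f (p, z)) q from rfl, h1, h2]
    simp

lemma contMDiff_coord (i : Fin 3) :
    ContMDiff (𝓡 2) 𝓘(ℝ, ℝ) ⊤ (fun z : Sphere2 => (z : E3) i) := by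
  have : (fun z : Sphere2 => (z : E3) i)
      = (EuclideanSpace.proj (𝕜 := ℝ) i) ∘ ((↑) : Sphere2 → E3) := rfl
  rw [this]
  exact (EuclideanSpace.proj (𝕜 := ℝ) i).contMDiff.comp contMDiff_coe_sphere

lemma contMDiff_coord1 (i : Fin 3) :
    ContMDiff ((𝓡 2).prod (𝓡 2)) 𝓘(ℝ, ℝ) ⊤
      (fun m : Sphere2 × Sphere2 => (m.1 : E3) i) :=
  (contMDiff_coord i).comp contMDiff_fst

lemma contMDiff_coord2 (i : Fin 3) :
    ContMDiff ((𝓡 2).prod (𝓡 2)) 𝓘(ℝ, ℝ) ⊤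
      (fun m : Sphere2 × Sphere2 => (m.2 : E3) i) :=
  (contMDiff_coord i).comp contMDiff_snd

lemma contMDiff_Lmap : ContMDiff ((𝓡 2).prod (𝓡 2)) 𝓘(ℝ, ℝ) ⊤ Lmap :=
  (contMDiff_coord1 2).add (contMDiff_const.mul (contMDiff_coord2 2))

lemma contMDiff_Hmap (s : ℝ) : ContMDiff ((𝓡 2).prod (𝓡 2)) 𝓘(ℝ, ℝ) ⊤ (Hmap s) :=
  (((contMDiff_const.mul (contMDiff_coord1 2)).add
      (contMDiff_const.mul (contMDiff_coord2 2))).add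
    (contMDiff_const.mul
      (((contMDiff_coord1 0).mul (contMDiff_coord2 0)).add
        ((contMDiff_coord1 1).mul (contMDiff_coord2 1)))))

/-- For every `s`, the differentials of `L` and `H_s` on `M = S² × S²` both vanish at `m`
if and only if `m` is one of the four products of poles: the rank-zero singular points of
`F_s = (L, H_s)` are exactly `N×N`, `N×S`, `S×N`, `S×S`. -/
theorem rank_zero_points_eq_products_of_poles (s : ℝ) (m : Sphere2 × Sphere2) :
    (mfderiv ((𝓡 2).prod (𝓡 2)) 𝓘(ℝ, ℝ) Lmap m = 0 ∧
        mfderiv ((𝓡 2).prod (𝓡 2)) 𝓘(ℝ, ℝ) (Hmap s) m = 0) ↔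
      m = (northPole, northPole) ∨ m = (northPole, southPole) ∨
        m = (southPole, northPole) ∨ m = (southPole, southPole) := by
  obtain ⟨p, q⟩ := m
  have hLd : MDifferentiableAt ((𝓡 2).prod (𝓡 2)) 𝓘(ℝ, ℝ) Lmap (p, q) :=
    (contMDiff_Lmap (p, q)).mdifferentiableAt (by simp)
  have hHd : MDifferentiableAt ((𝓡 2).prod (𝓡 2)) 𝓘(ℝ, ℝ) (Hmap s) (p, q) :=
    (contMDiff_Hmap s (p, q)).mdifferentiableAt (by simp)
  have eL1 : (fun z : Sphere2 => Lmap (z, q)) = fun z : Sphere2 =>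
      (EuclideanSpace.proj (𝕜 := ℝ) (2 : Fin 3)) (z : E3) + 2 * (q : E3) 2 := rfl
  have eL2 : (fun z : Sphere2 => Lmap (p, z)) = fun z : Sphere2 =>
      ((2 : ℝ) • EuclideanSpace.proj (𝕜 := ℝ) (2 : Fin 3)) (z : E3) + (p : E3) 2 := by
    funext z; simp [Lmap]; try ring
  constructor
  · rintro ⟨hL, -⟩
    rw [mfderiv_prod_zero_iff p q hLd] at hL
    obtain ⟨h1, h2⟩ := hL
    have hp : p = northPole ∨ p = southPole := by
      rw [← proj2_vanish_iff]
      intro w hw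
      rw [eL1] at h1; replace h1 := (mfderiv_sphere_lin (EuclideanSpace.proj (𝕜 := ℝ) (2 : Fin 3)) (2 * (q : E3) 2) p).1 h1
      simpa using h1 w hw
    have hq : q = northPole ∨ q = southPole := by
      rw [← proj2_vanish_iff]
      intro w hw
      rw [eL2] at h2; replace h2 := (mfderiv_sphere_lin ((2 : ℝ) • EuclideanSpace.proj (𝕜 := ℝ) (2 : Fin 3)) ((p : E3) 2) q).1 h2
      have h := h2 w hw
      simp at h
      simpa using h
    rcases hp with rfl | rfl <;> rcases hq with rfl | rfl <;> simp
  · intro h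
    have hp : p = northPole ∨ p = southPole := by
      rcases h with h | h | h | h <;> simp at h <;> simp [h.1]
    have hq : q = northPole ∨ q = southPole := by
      rcases h with h | h | h | h <;> simp at h <;> simp [h.2]
    have hp2 : ∀ w ∈ (ℝ ∙ (p : E3))ᗮ, w 2 = 0 := (proj2_vanish_iff p).2 hp
    have hq2 : ∀ w ∈ (ℝ ∙ (q : E3))ᗮ, w 2 = 0 := (proj2_vanish_iff q).2 hq
    have hp01 : (p : E3) 0 = 0 ∧ (p : E3) 1 = 0 := by
      rcases hp with rfl | rfl <;> constructor <;>
        simp [northPole, southPole, EuclideanSpace.single_apply]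
    have hq01 : (q : E3) 0 = 0 ∧ (q : E3) 1 = 0 := by
      rcases hq with rfl | rfl <;> constructor <;>
        simp [northPole, southPole, EuclideanSpace.single_apply]
    constructor
    · rw [mfderiv_prod_zero_iff p q hLd]
      constructor
      · rw [eL1]; refine (mfderiv_sphere_lin (EuclideanSpace.proj (𝕜 := ℝ) (2 : Fin 3)) (2 * (q : E3) 2) p).2 ?_
        intro w hw
        simpa using hp2 w hw
      · rw [eL2]; refine (mfderiv_sphere_lin ((2 : ℝ) • EuclideanSpace.proj (𝕜 := ℝ) (2 : Fin 3)) ((p : E3) 2) q).2 ?_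
        intro w hw
        simp [hq2 w hw]
    · rw [mfderiv_prod_zero_iff p q hHd]
      constructor
      · have eH1 : (fun z : Sphere2 => Hmap s (z, q)) = fun z : Sphere2 =>
            ((1 - s) • EuclideanSpace.proj (𝕜 := ℝ) (2 : Fin 3)) (z : E3) + s * (q : E3) 2 := by
          funext z; simp [Hmap, hq01.1, hq01.2]; try ring
        rw [eH1]; refine (mfderiv_sphere_lin ((1 - s) • EuclideanSpace.proj (𝕜 := ℝ) (2 : Fin 3)) (s * (q : E3) 2) p).2 ?_
        intro w hw
        simp [hp2 w hw]
      · have eH2 : (fun z : Sphere2 => Hmap s (p, z)) = fun z : Sphere2 =>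
            (s • EuclideanSpace.proj (𝕜 := ℝ) (2 : Fin 3)) (z : E3) + (1 - s) * (p : E3) 2 := by
          funext z; simp [Hmap, hp01.1, hp01.2]; try ring
        rw [eH2]; refine (mfderiv_sphere_lin (s • EuclideanSpace.proj (𝕜 := ℝ) (2 : Fin 3)) ((1 - s) * (p : E3) 2) q).2 ?_
        intro w hw
        simp [hq2 w hw]
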